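/- arXiv:2501.02562 — 4 statements merged into one kernel-verified Lean document; each statement's English description precedes it below -/
import Mathlib

section
/- Let n ≥ 1 be an integer and let σ, β1, β2 be real numbers with 0 ≤ σ < n, β1 > n and β2 > n. Then there exists a constant C = C(n,σ,β1,β2) > 0 such that for every τ ∈ ℝⁿ the double integral ∫_{ℝⁿ}∫_{ℝⁿ} |x−y|^{−σ} ⟨x−τ⟩^{−β1} ⟨y⟩^{−β2} dx dy is finite and satisfies ∫_{ℝⁿ}∫_{ℝⁿ} |x−y|^{−σ} ⟨x−τ⟩^{−β1} ⟨y⟩^{−β2} dx dy ≤ C ⟨τ⟩^{−σ}. -/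
/-!
Write `⟨x⟩ = √(1 + ‖x‖²)` and `n = dim E`. The heart of the matter is the convolution bound
`∫ ‖z‖^{-σ} ⟨z - a⟩^{-β} dz ≲ ⟨a⟩^{-σ}` for `β > n > σ ≥ 0`. Split at `‖z‖ = ⟨a⟩/2`. On the
ball, `⟨z - a⟩ ≥ ⟨a⟩/2` because `⟨·⟩` is 1-Lipschitz, and scaling gives
`∫_{‖z‖<R} ‖z‖^{-σ} = R^{n-σ} ∫_{‖z‖<1} ‖z‖^{-σ}`, so this part is `≲ ⟨a⟩^{n-σ-β} ≤ ⟨a⟩^{-σ}`.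
Off the ball, `‖z‖^{-σ} ≲ ⟨a⟩^{-σ}` and `⟨·⟩^{-β}` is integrable.

By Tonelli the double integral is then `≲ ∫ ⟨x⟩^{-σ} ⟨x - τ⟩^{-β₁} dx`, and since
`⟨x⟩ ≥ ‖x‖` this is again the convolution bound.
-/

open MeasureTheory Set Metric Module
open scoped ENNReal NNReal

lemma div_two_rpow_neg {A : ℝ} (hA : 0 ≤ A) (s : ℝ) : (A / 2) ^ (-s) = 2 ^ s * A ^ (-s) := by
  rw [Real.div_rpow hA zero_le_two, Real.rpow_neg zero_le_two, div_inv_eq_mul, mul_comm]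

section NormedAddCommGroup

variable {E : Type*} [NormedAddCommGroup E]

lemma one_le_sqrt_one_add_norm_sq (x : E) : 1 ≤ √(1 + ‖x‖ ^ 2) :=
  Real.one_le_sqrt.2 (le_add_of_nonneg_right (sq_nonneg _))

lemma norm_le_sqrt_one_add_norm_sq (x : E) : ‖x‖ ≤ √(1 + ‖x‖ ^ 2) :=
  Real.le_sqrt_of_sq_le (by linarith)

-- `⟨x⟩` is the norm of `(1, x)` in `ℝ × E` with the Euclidean product norm.
lemma sqrt_one_add_norm_sq_le_add_norm_sub (x y : E) :
    √(1 + ‖x‖ ^ 2) ≤ √(1 + ‖y‖ ^ 2) + ‖x - y‖ := by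
  have hy := norm_le_sqrt_one_add_norm_sq y
  have hxy : ‖x‖ ≤ ‖y‖ + ‖x - y‖ := norm_le_insert' x y
  refine Real.sqrt_le_iff.2 ⟨by positivity, ?_⟩
  have hsq := Real.sq_sqrt (show (0 : ℝ) ≤ 1 + ‖y‖ ^ 2 by positivity)
  nlinarith [norm_nonneg x, norm_nonneg (x - y)]

variable [MeasurableSpace E] [BorelSpace E] (μ : Measure E) [μ.IsAddRightInvariant]

lemma setLIntegral_compl_ball_norm_rpow_neg_mul_le {σ : ℝ} (hσ0 : 0 ≤ σ) (β : ℝ) (a : E) :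
    ∫⁻ z in (ball (0 : E) (√(1 + ‖a‖ ^ 2) / 2))ᶜ,
        ENNReal.ofReal (‖z‖ ^ (-σ) * √(1 + ‖z - a‖ ^ 2) ^ (-β)) ∂μ ≤
      ENNReal.ofReal (2 ^ σ) * (∫⁻ y, ENNReal.ofReal (√(1 + ‖y‖ ^ 2) ^ (-β)) ∂μ) *
        ENNReal.ofReal (√(1 + ‖a‖ ^ 2) ^ (-σ)) := by
  set A := √(1 + ‖a‖ ^ 2)
  have hA0 : 0 < A := one_pos.trans_le (one_le_sqrt_one_add_norm_sq a)
  calc ∫⁻ z in (ball (0 : E) (A / 2))ᶜ,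
        ENNReal.ofReal (‖z‖ ^ (-σ) * √(1 + ‖z - a‖ ^ 2) ^ (-β)) ∂μ
      ≤ ∫⁻ z in (ball (0 : E) (A / 2))ᶜ,
          ENNReal.ofReal (2 ^ σ * A ^ (-σ)) * ENNReal.ofReal (√(1 + ‖z - a‖ ^ 2) ^ (-β)) ∂μ := by
        refine setLIntegral_mono' measurableSet_ball.compl fun z hz => ?_
        rw [← ENNReal.ofReal_mul (by positivity), ← div_two_rpow_neg hA0.le]
        have hz : A / 2 ≤ ‖z‖ := by simpa using hz
        refine ENNReal.ofReal_le_ofReal (mul_le_mul_of_nonneg_right ?_ (by positivity))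
        exact Real.rpow_le_rpow_of_nonpos (by positivity) hz (by linarith)
    _ ≤ ∫⁻ z, ENNReal.ofReal (2 ^ σ * A ^ (-σ)) *
          ENNReal.ofReal (√(1 + ‖z - a‖ ^ 2) ^ (-β)) ∂μ := setLIntegral_le_lintegral _ _
    _ = _ := by
        rw [lintegral_const_mul' _ _ ENNReal.ofReal_ne_top,
          lintegral_sub_right_eq_self (fun y => ENNReal.ofReal (√(1 + ‖y‖ ^ 2) ^ (-β))) a,
          ENNReal.ofReal_mul (by positivity)]
        ring

end NormedAddCommGroup

section FiniteDimensional

variable {E : Type*} [NormedAddCommGroup E] [NormedSpace ℝ E] [FiniteDimensional ℝ E]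
  [MeasurableSpace E] [BorelSpace E] (μ : Measure E) [μ.IsAddHaarMeasure]

lemma lintegral_sqrt_one_add_norm_sq_rpow_neg_ne_top {β : ℝ} (hβ : finrank ℝ E < β) :
    ∫⁻ y, ENNReal.ofReal (√(1 + ‖y‖ ^ 2) ^ (-β)) ∂μ ≠ ∞ := by
  have hsqrt (y : E) : √(1 + ‖y‖ ^ 2) ^ (-β) = (1 + ‖y‖ ^ 2) ^ (-β / 2) := by
    rw [Real.sqrt_eq_rpow, ← Real.rpow_mul (by positivity)]
    ring_nf
  simp_rw [hsqrt]
  exact (integrable_rpow_neg_one_add_norm_sq hβ).lintegral_lt_top.ne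

lemma setIntegral_ball_norm_rpow (s : ℝ) {R : ℝ} (hR : 0 < R) :
    ∫ z in ball (0 : E) R, ‖z‖ ^ s ∂μ =
      R ^ (finrank ℝ E + s) * ∫ z in ball (0 : E) 1, ‖z‖ ^ s ∂μ := by
  have h := Measure.setIntegral_comp_smul_of_pos μ (fun z : E => ‖z‖ ^ s) (ball 0 1) hR
  simp only [smul_unitBall_of_pos hR, norm_smul, Real.norm_of_nonneg hR.le,
    Real.mul_rpow hR.le (norm_nonneg _), integral_const_mul, smul_eq_mul] at h
  rw [Real.rpow_add hR, Real.rpow_natCast, mul_assoc, h, ← mul_assoc,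
    mul_inv_cancel₀ (by positivity), one_mul]

lemma setLIntegral_ball_norm_rpow_neg {σ : ℝ} (hσ0 : 0 ≤ σ) (hσn : σ < finrank ℝ E) {R : ℝ}
    (hR : 0 < R) :
    ∫⁻ z in ball (0 : E) R, ENNReal.ofReal (‖z‖ ^ (-σ)) ∂μ =
      ENNReal.ofReal (R ^ (finrank ℝ E - σ) * ∫ z in ball (0 : E) 1, ‖z‖ ^ (-σ) ∂μ) := by
  have hd : 1 ≤ finrank ℝ E := by exact_mod_cast hσ0.trans_lt hσn
  have hint : IntegrableOn (fun z : E => ‖z‖ ^ (-σ)) (ball 0 R) μ :=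
    integrableOn_ball_of_norm_le_rpow (C := 1) hd hσn
      (ae_of_all _ fun z => by simp [Real.norm_of_nonneg (by positivity : 0 ≤ ‖z‖ ^ (-σ))])
      (measurable_norm.pow_const _).aestronglyMeasurable
  rw [← ofReal_integral_eq_lintegral_ofReal hint (ae_of_all _ fun z => by positivity),
    setIntegral_ball_norm_rpow μ _ hR, sub_eq_add_neg]

lemma setLIntegral_ball_norm_rpow_neg_mul_le {σ β : ℝ} (hσ0 : 0 ≤ σ) (hσn : σ < finrank ℝ E)
    (hβ : finrank ℝ E ≤ β) (a : E) :
    ∫⁻ z in ball (0 : E) (√(1 + ‖a‖ ^ 2) / 2),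
        ENNReal.ofReal (‖z‖ ^ (-σ) * √(1 + ‖z - a‖ ^ 2) ^ (-β)) ∂μ ≤
      ENNReal.ofReal (2 ^ β * ∫ z in ball (0 : E) 1, ‖z‖ ^ (-σ) ∂μ) *
        ENNReal.ofReal (√(1 + ‖a‖ ^ 2) ^ (-σ)) := by
  set A := √(1 + ‖a‖ ^ 2)
  set I := ∫ z in ball (0 : E) 1, ‖z‖ ^ (-σ) ∂μ
  have hA1 : 1 ≤ A := one_le_sqrt_one_add_norm_sq a
  have hA0 : 0 < A := one_pos.trans_le hA1
  have hI : 0 ≤ I := setIntegral_nonneg measurableSet_ball fun z _ => by positivity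
  have hbracket : ∀ z ∈ ball (0 : E) (A / 2), A / 2 ≤ √(1 + ‖z - a‖ ^ 2) := fun z hz => by
    have := sqrt_one_add_norm_sq_le_add_norm_sub a (a - z)
    rw [sub_sub_cancel, norm_sub_rev a z] at this
    linarith [mem_ball_zero_iff.1 hz]
  have hpow : (A / 2) ^ (-β) * (A / 2) ^ (finrank ℝ E - σ) * I ≤ 2 ^ β * I * A ^ (-σ) :=
    calc (A / 2) ^ (-β) * (A / 2) ^ (finrank ℝ E - σ) * I
        = 2 ^ β * I * (A ^ (-β) * (A / 2) ^ (finrank ℝ E - σ)) := by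
          rw [div_two_rpow_neg hA0.le]; ring
      _ ≤ 2 ^ β * I * (A ^ (-β) * A ^ (finrank ℝ E - σ)) := by
          gcongr; linarith
      _ = 2 ^ β * I * A ^ (finrank ℝ E - σ - β) := by
          rw [← Real.rpow_add hA0]; ring_nf
      _ ≤ 2 ^ β * I * A ^ (-σ) := by gcongr; linarith
  calc ∫⁻ z in ball (0 : E) (A / 2), ENNReal.ofReal (‖z‖ ^ (-σ) * √(1 + ‖z - a‖ ^ 2) ^ (-β)) ∂μ
      ≤ ∫⁻ z in ball (0 : E) (A / 2),
          ENNReal.ofReal ((A / 2) ^ (-β)) * ENNReal.ofReal (‖z‖ ^ (-σ)) ∂μ := by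
        refine setLIntegral_mono' measurableSet_ball fun z hz => ?_
        rw [← ENNReal.ofReal_mul (by positivity), mul_comm ((A / 2) ^ (-β))]
        refine ENNReal.ofReal_le_ofReal (mul_le_mul_of_nonneg_left ?_ (by positivity))
        exact Real.rpow_le_rpow_of_nonpos (by positivity) (hbracket z hz) (by linarith)
    _ = ENNReal.ofReal ((A / 2) ^ (-β) * (A / 2) ^ (finrank ℝ E - σ) * I) := by
        rw [lintegral_const_mul' _ _ ENNReal.ofReal_ne_top,
          setLIntegral_ball_norm_rpow_neg μ hσ0 hσn (by positivity),
          ← ENNReal.ofReal_mul (by positivity), mul_assoc]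
    _ ≤ ENNReal.ofReal (2 ^ β * I) * ENNReal.ofReal (A ^ (-σ)) := by
        rw [← ENNReal.ofReal_mul (by positivity)]
        exact ENNReal.ofReal_le_ofReal hpow

theorem exists_lintegral_norm_rpow_neg_mul_le {σ β : ℝ} (hσ0 : 0 ≤ σ) (hσn : σ < finrank ℝ E)
    (hβ : finrank ℝ E < β) :
    ∃ C : ℝ≥0, ∀ a : E, ∫⁻ z, ENNReal.ofReal (‖z‖ ^ (-σ) * √(1 + ‖z - a‖ ^ 2) ^ (-β)) ∂μ ≤
      C * ENNReal.ofReal (√(1 + ‖a‖ ^ 2) ^ (-σ)) := by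
  set C := ENNReal.ofReal (2 ^ β * ∫ z in ball (0 : E) 1, ‖z‖ ^ (-σ) ∂μ) +
    ENNReal.ofReal (2 ^ σ) * ∫⁻ y, ENNReal.ofReal (√(1 + ‖y‖ ^ 2) ^ (-β)) ∂μ
  have hC : C ≠ ∞ := by
    have := lintegral_sqrt_one_add_norm_sq_rpow_neg_ne_top μ hβ
    finiteness
  refine ⟨C.toNNReal, fun a => ?_⟩
  rw [ENNReal.coe_toNNReal hC, ← lintegral_add_compl _ measurableSet_ball, add_mul]
  exact add_le_add (setLIntegral_ball_norm_rpow_neg_mul_le μ hσ0 hσn hβ.le a)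
    (setLIntegral_compl_ball_norm_rpow_neg_mul_le μ hσ0 β a)

theorem exists_lintegral_sqrt_rpow_neg_mul_le {σ β : ℝ} (hσ0 : 0 ≤ σ) (hσn : σ < finrank ℝ E)
    (hβ : finrank ℝ E < β) :
    ∃ C : ℝ≥0, ∀ τ : E,
      ∫⁻ x, ENNReal.ofReal (√(1 + ‖x‖ ^ 2) ^ (-σ) * √(1 + ‖x - τ‖ ^ 2) ^ (-β)) ∂μ ≤
        C * ENNReal.ofReal (√(1 + ‖τ‖ ^ 2) ^ (-σ)) := by
  have : Nontrivial E := finrank_pos_iff.1 (by exact_mod_cast hσ0.trans_lt hσn)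
  obtain ⟨C, hC⟩ := exists_lintegral_norm_rpow_neg_mul_le μ hσ0 hσn hβ
  refine ⟨C, fun τ => (lintegral_mono_ae ?_).trans (hC τ)⟩
  filter_upwards [Measure.ae_ne μ 0] with x hx
  refine ENNReal.ofReal_le_ofReal (mul_le_mul_of_nonneg_right ?_ (by positivity))
  exact Real.rpow_le_rpow_of_nonpos (norm_pos_iff.2 hx)
    (norm_le_sqrt_one_add_norm_sq x) (by linarith)

theorem exists_lintegral_prod_norm_sub_rpow_neg_mul_le {σ β₁ β₂ : ℝ} (hσ0 : 0 ≤ σ)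
    (hσn : σ < finrank ℝ E) (hβ₁ : finrank ℝ E < β₁) (hβ₂ : finrank ℝ E < β₂) :
    ∃ C : ℝ≥0, ∀ τ : E,
      ∫⁻ p : E × E, ENNReal.ofReal (‖p.1 - p.2‖ ^ (-σ) * √(1 + ‖p.1 - τ‖ ^ 2) ^ (-β₁) *
          √(1 + ‖p.2‖ ^ 2) ^ (-β₂)) ∂μ.prod μ ≤
        C * ENNReal.ofReal (√(1 + ‖τ‖ ^ 2) ^ (-σ)) := by
  obtain ⟨C₂, hC₂⟩ := exists_lintegral_norm_rpow_neg_mul_le μ hσ0 hσn hβ₂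
  obtain ⟨C₁, hC₁⟩ := exists_lintegral_sqrt_rpow_neg_mul_le μ hσ0 hσn hβ₁
  refine ⟨C₂ * C₁, fun τ => ?_⟩
  have hinner (x : E) :
      ∫⁻ y, ENNReal.ofReal (‖x - y‖ ^ (-σ) * √(1 + ‖x - τ‖ ^ 2) ^ (-β₁) *
          √(1 + ‖y‖ ^ 2) ^ (-β₂)) ∂μ ≤
        C₂ * ENNReal.ofReal (√(1 + ‖x‖ ^ 2) ^ (-σ) * √(1 + ‖x - τ‖ ^ 2) ^ (-β₁)) := by
    calc ∫⁻ y, ENNReal.ofReal (‖x - y‖ ^ (-σ) * √(1 + ‖x - τ‖ ^ 2) ^ (-β₁) *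
          √(1 + ‖y‖ ^ 2) ^ (-β₂)) ∂μ
        = ENNReal.ofReal (√(1 + ‖x - τ‖ ^ 2) ^ (-β₁)) *
            ∫⁻ z, ENNReal.ofReal (‖z‖ ^ (-σ) * √(1 + ‖z - x‖ ^ 2) ^ (-β₂)) ∂μ := by
          rw [← lintegral_const_mul' _ _ ENNReal.ofReal_ne_top,
            ← lintegral_sub_left_eq_self _ x]
          refine lintegral_congr fun y => ?_
          rw [← ENNReal.ofReal_mul (by positivity), sub_sub_cancel, norm_sub_rev y x]
          ring_nf
      _ ≤ ENNReal.ofReal (√(1 + ‖x - τ‖ ^ 2) ^ (-β₁)) *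
            (C₂ * ENNReal.ofReal (√(1 + ‖x‖ ^ 2) ^ (-σ))) := by gcongr; exact hC₂ x
      _ = _ := by rw [ENNReal.ofReal_mul (by positivity)]; ring
  calc ∫⁻ p : E × E, ENNReal.ofReal (‖p.1 - p.2‖ ^ (-σ) * √(1 + ‖p.1 - τ‖ ^ 2) ^ (-β₁) *
          √(1 + ‖p.2‖ ^ 2) ^ (-β₂)) ∂μ.prod μ
      ≤ ∫⁻ x, C₂ * ENNReal.ofReal (√(1 + ‖x‖ ^ 2) ^ (-σ) * √(1 + ‖x - τ‖ ^ 2) ^ (-β₁)) ∂μ := by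
        rw [lintegral_prod _ (by fun_prop)]
        exact lintegral_mono hinner
    _ ≤ C₂ * (C₁ * ENNReal.ofReal (√(1 + ‖τ‖ ^ 2) ^ (-σ))) := by
        rw [lintegral_const_mul' _ _ ENNReal.coe_ne_top]
        gcongr
        exact hC₁ τ
    _ = _ := by push_cast; ring

end FiniteDimensional

lemma integrable_and_integral_le_of_lintegral_le {α : Type*} [MeasurableSpace α] {μ : Measure α}
    {f : α → ℝ} (hf : 0 ≤ f) (hfm : AEStronglyMeasurable f μ) {c : ℝ} (hc : 0 ≤ c)
    (h : ∫⁻ a, ENNReal.ofReal (f a) ∂μ ≤ ENNReal.ofReal c) :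
    Integrable f μ ∧ ∫ a, f a ∂μ ≤ c := by
  refine ⟨(lintegral_ofReal_ne_top_iff_integrable hfm (ae_of_all _ hf)).1
    (ne_top_of_le_ne_top ENNReal.ofReal_ne_top h), ?_⟩
  rw [integral_eq_lintegral_of_nonneg_ae (ae_of_all _ hf) hfm]
  exact ENNReal.toReal_le_of_le_ofReal hc h

theorem weighted_double_integral_bound_general
    (n : ℕ) (σ β₁ β₂ : ℝ)
    (hσ0 : 0 ≤ σ) (hσn : σ < n) (hβ₁ : (n:ℝ) < β₁) (hβ₂ : (n:ℝ) < β₂) :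
    ∃ C : ℝ, 0 < C ∧
      ∀ τ : EuclideanSpace ℝ (Fin n),
        Integrable (fun p : EuclideanSpace ℝ (Fin n) × EuclideanSpace ℝ (Fin n) =>
          ‖p.1 - p.2‖ ^ (-σ) * Real.sqrt (1 + ‖p.1 - τ‖^2) ^ (-β₁) *
            Real.sqrt (1 + ‖p.2‖^2) ^ (-β₂)) ∧
        (∫ p : EuclideanSpace ℝ (Fin n) × EuclideanSpace ℝ (Fin n),
            ‖p.1 - p.2‖ ^ (-σ) * Real.sqrt (1 + ‖p.1 - τ‖^2) ^ (-β₁) *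
              Real.sqrt (1 + ‖p.2‖^2) ^ (-β₂)) ≤
          C * Real.sqrt (1 + ‖τ‖^2) ^ (-σ) := by
  rw [← finrank_euclideanSpace_fin (𝕜 := ℝ) (n := n)] at hσn hβ₁ hβ₂
  obtain ⟨C, hC⟩ := exists_lintegral_prod_norm_sub_rpow_neg_mul_le volume hσ0 hσn hβ₁ hβ₂
  refine ⟨C + 1, by positivity, fun τ => integrable_and_integral_le_of_lintegral_le
    (fun p => by positivity) (by fun_prop) (by positivity) ((hC τ).trans ?_)⟩
  rw [ENNReal.ofReal_mul (by positivity), ← ENNReal.ofReal_coe_nnreal]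
  gcongr
  simp

/-- Lemma 2.7, second estimate: the weighted double-integral bound
    `∫∫ |x-y|^{-σ} ⟨x-τ⟩^{-β₁} ⟨y⟩^{-β₂} dx dy ≤ C ⟨τ⟩^{-σ}`.
    Here `⟨x⟩ = (1+|x|²)^{1/2}` is the Japanese bracket. -/
theorem weighted_double_integral_bound
    (n : ℕ) (hn : 1 ≤ n) (σ β₁ β₂ : ℝ)
    (hσ0 : 0 ≤ σ) (hσn : σ < n) (hβ₁ : (n:ℝ) < β₁) (hβ₂ : (n:ℝ) < β₂) :
    ∃ C : ℝ, 0 < C ∧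
      ∀ τ : EuclideanSpace ℝ (Fin n),
        Integrable (fun p : EuclideanSpace ℝ (Fin n) × EuclideanSpace ℝ (Fin n) =>
          ‖p.1 - p.2‖ ^ (-σ) * Real.sqrt (1 + ‖p.1 - τ‖^2) ^ (-β₁) *
            Real.sqrt (1 + ‖p.2‖^2) ^ (-β₂)) ∧
        (∫ p : EuclideanSpace ℝ (Fin n) × EuclideanSpace ℝ (Fin n),
            ‖p.1 - p.2‖ ^ (-σ) * Real.sqrt (1 + ‖p.1 - τ‖^2) ^ (-β₁) *
              Real.sqrt (1 + ‖p.2‖^2) ^ (-β₂)) ≤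
          C * Real.sqrt (1 + ‖τ‖^2) ^ (-σ) :=
  weighted_double_integral_bound_general n σ β₁ β₂ hσ0 hσn hβ₁ hβ₂
end

section
/- Let n ≥ 1, m ≥ 1 and K ≥ 0 be integers with 2K ≤ 2m − n − 1. For multi-indices α, β ∈ ℕⁿ with |α| ≤ K and |β| ≤ K define A_{α,β} = ((−1)^{|β|} i^{|α|+|β|} / ((2π)^n α! β!)) ∫_{ℝⁿ} ξ^{α+β}/(1+|ξ|^{2m}) dξ (these integrals are absolutely convergent since |α|+|β| ≤ 2m−n−1). Then the matrix (A_{α,β})_{|α|,|β| ≤ K} is Hermitian positive definite: for every family of complex numbers (c_α)_{|α| ≤ K} that is not identically zero, the sum Σ_{|α| ≤ K} Σ_{|β| ≤ K} A_{α,β} c_α \overline{c_β} is a real number and is strictly positive. -/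
open MeasureTheory Complex

private lemma coord_abs_le_norm {n : ℕ} (ξ : EuclideanSpace ℝ (Fin n)) (i : Fin n) :
    |ξ i| ≤ ‖ξ‖ := by
  rw [EuclideanSpace.norm_eq]
  have h1 : |ξ i| = Real.sqrt (‖ξ i‖ ^ 2) := by
    rw [Real.norm_eq_abs, Real.sqrt_sq (abs_nonneg _)]
  rw [h1]
  exact Real.sqrt_le_sqrt (Finset.single_le_sum (f := fun j => ‖ξ j‖ ^ 2)
    (fun j _ => sq_nonneg _) (Finset.mem_univ i))

private lemma prod_pow_abs_le {n : ℕ} (ξ : EuclideanSpace ℝ (Fin n)) (γ : Fin n → ℕ) :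
    |∏ i, ξ i ^ γ i| ≤ ‖ξ‖ ^ (∑ i, γ i) := by
  rw [Finset.abs_prod, ← Finset.prod_pow_eq_pow_sum]
  refine Finset.prod_le_prod (fun i _ => abs_nonneg _) (fun i _ => ?_)
  rw [_root_.abs_pow]
  exact pow_le_pow_left₀ (abs_nonneg _) (coord_abs_le_norm ξ i) _

private lemma coord_continuous {n : ℕ} (i : Fin n) :
    Continuous fun ξ : EuclideanSpace ℝ (Fin n) => ξ i :=
  (EuclideanSpace.proj (𝕜 := ℝ) i).continuous

private lemma integrable_monomial_div {n m : ℕ} (γ : Fin n → ℕ)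
    (hd : (∑ i, γ i) + n + 1 ≤ 2 * m) :
    Integrable (fun ξ : EuclideanSpace ℝ (Fin n) =>
      (∏ i, ξ i ^ γ i) / (1 + ‖ξ‖ ^ (2 * m))) := by
  have hD : ∀ ξ : EuclideanSpace ℝ (Fin n), 0 < 1 + ‖ξ‖ ^ (2 * m) := fun ξ => by positivity
  have hcont : Continuous fun ξ : EuclideanSpace ℝ (Fin n) =>
      (∏ i, ξ i ^ γ i) / (1 + ‖ξ‖ ^ (2 * m)) := by
    refine Continuous.div ?_ ?_ (fun ξ => (hD ξ).ne')
    · exact continuous_finset_prod _ fun i _ => (coord_continuous i).pow _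
    · exact continuous_const.add (continuous_norm.pow _)
  have hint : Integrable (fun ξ : EuclideanSpace ℝ (Fin n) =>
      (2 : ℝ) ^ (2 * m) * (1 + ‖ξ‖) ^ (-(n + 1 : ℝ))) := by
    refine (integrable_one_add_norm ?_).const_mul _
    rw [finrank_euclideanSpace_fin]
    norm_num
  refine hint.mono' hcont.aestronglyMeasurable ?_
  filter_upwards with ξ
  have ht0 : (0:ℝ) ≤ ‖ξ‖ := norm_nonneg _
  set t : ℝ := ‖ξ‖ with ht
  have h1t : (0:ℝ) < 1 + t := by linarith
  have hrpow : (1 + t) ^ (-(n + 1 : ℝ)) = ((1 + t) ^ (n + 1 : ℕ))⁻¹ := by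
    rw [← Real.rpow_natCast (1 + t) (n+1), ← Real.rpow_neg h1t.le]
    norm_num
  rw [Real.norm_eq_abs, abs_div, abs_of_pos (hD ξ), hrpow, ← div_eq_mul_inv]
  rw [div_le_div_iff₀ (hD ξ) (pow_pos h1t _)]
  have hb1 : |∏ i, ξ i ^ γ i| * (1 + t) ^ (n + 1) ≤ (1 + t) ^ ((∑ i, γ i) + n + 1) := by
    have h2 : |∏ i, ξ i ^ γ i| ≤ (1 + t) ^ (∑ i, γ i) :=
      (prod_pow_abs_le ξ γ).trans (pow_le_pow_left₀ ht0 (by linarith) _)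
    calc |∏ i, ξ i ^ γ i| * (1 + t) ^ (n + 1)
        ≤ (1 + t) ^ (∑ i, γ i) * (1 + t) ^ (n + 1) :=
          mul_le_mul_of_nonneg_right h2 (by positivity)
      _ = (1 + t) ^ ((∑ i, γ i) + n + 1) := by rw [← pow_add]; ring_nf
  have hb2 : (1 + t) ^ ((∑ i, γ i) + n + 1) ≤ (1 + t) ^ (2 * m) :=
    pow_le_pow_right₀ (by linarith) hd
  have hb3 : (1 + t) ^ (2 * m) ≤ 2 ^ (2 * m) * (1 + t ^ (2 * m)) := by
    rcases le_total t 1 with h | h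
    · have : (1 + t) ^ (2 * m) ≤ 2 ^ (2 * m) := pow_le_pow_left₀ (by linarith) (by linarith) _
      have h2 : (1:ℝ) ≤ 1 + t ^ (2 * m) := by nlinarith [pow_nonneg ht0 (2*m)]
      nlinarith [pow_nonneg (by norm_num : (0:ℝ) ≤ 2) (2*m)]
    · have h1 : (1 + t) ^ (2 * m) ≤ (2 * t) ^ (2 * m) :=
        pow_le_pow_left₀ (by linarith) (by linarith) _
      rw [mul_pow] at h1
      have h2 : t ^ (2 * m) ≤ 1 + t ^ (2 * m) := by linarith
      nlinarith [pow_nonneg (by norm_num : (0:ℝ) ≤ 2) (2*m)]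
  calc |∏ i, ξ i ^ γ i| * (1 + t) ^ (n + 1) ≤ (1 + t) ^ (2 * m) := hb1.trans hb2
    _ ≤ 2 ^ (2 * m) * (1 + t ^ (2 * m)) := hb3

private lemma monomial_indep_real {n : ℕ} (S : Finset (Fin n → ℕ)) (r : (Fin n → ℕ) → ℝ)
    (h : ∀ x : Fin n → ℝ, ∑ α ∈ S, r α * ∏ i, x i ^ α i = 0) :
    ∀ α ∈ S, r α = 0 := by
  intro α hα
  set e : (Fin n → ℕ) ≃ (Fin n →₀ ℕ) := Finsupp.equivFunOnFinite.symm with he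
  have hp : (∑ β ∈ S, MvPolynomial.monomial (e β) (r β) : MvPolynomial (Fin n) ℝ) = 0 := by
    apply MvPolynomial.funext
    intro x
    rw [map_sum, map_zero, ← h x]
    refine Finset.sum_congr rfl fun β _ => ?_
    rw [MvPolynomial.eval_monomial, Finsupp.prod]
    congr 1
    rw [Finset.prod_subset (Finset.subset_univ (e β).support)
      (fun i _ hi => by rw [Finsupp.notMem_support_iff.mp hi, pow_zero])]
    exact Finset.prod_congr rfl fun i _ => by simp [he]
  have hco := congrArg (MvPolynomial.coeff (e α)) hp
  simp only [MvPolynomial.coeff_sum, MvPolynomial.coeff_monomial, MvPolynomial.coeff_zero] at hco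
  rwa [Finset.sum_eq_single_of_mem α hα
    (fun β _ hne => if_neg fun hh => hne (e.injective hh)), if_pos rfl] at hco

private lemma monomial_indep_complex {n : ℕ} (S : Finset (Fin n → ℕ)) (d : (Fin n → ℕ) → ℂ)
    (h : ∀ x : Fin n → ℝ, ∑ α ∈ S, d α * ((∏ i, x i ^ α i : ℝ) : ℂ) = 0) :
    ∀ α ∈ S, d α = 0 := by
  intro α hα
  have hre := monomial_indep_real S (fun β => (d β).re) (fun x => by
    have := congrArg Complex.re (h x)
    simpa only [Complex.re_sum, Complex.mul_re, Complex.ofReal_re, Complex.ofReal_im,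
      mul_zero, sub_zero, Complex.zero_re] using this) α hα
  have him := monomial_indep_real S (fun β => (d β).im) (fun x => by
    have := congrArg Complex.im (h x)
    simpa only [Complex.im_sum, Complex.mul_im, Complex.ofReal_re, Complex.ofReal_im,
      mul_zero, zero_add, Complex.zero_im] using this) α hα
  exact Complex.ext hre him

private lemma integral_ofReal_complex {X : Type*} [MeasurableSpace X] {μ : Measure X}
    (f : X → ℝ) : ∫ x, ((f x : ℝ) : ℂ) ∂μ = ((∫ x, f x ∂μ : ℝ) : ℂ) :=
  integral_ofReal

/-- Positive definiteness of the Gram matrix of Taylor coefficients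
    `A_{α,β}` of the kernel of `((-Δ)^m + 1)^{-1}` (formula (5.48)):
    for any family `(c_α)_{|α| ≤ K}` not identically zero, the quadratic form
    `Σ_{α,β} A_{α,β} c_α conj(c_β)` is real and strictly positive. -/
theorem gram_matrix_positive_definite
    (n m K : ℕ) (hn : 1 ≤ n) (hm : 1 ≤ m)
    (hK : 2 * (K : ℤ) ≤ 2 * (m : ℤ) - (n : ℤ) - 1)
    (A : (Fin n → ℕ) → (Fin n → ℕ) → ℂ)
    (hA : ∀ α β : Fin n → ℕ, A α β =
      ((-1 : ℂ) ^ (∑ i, β i) * Complex.I ^ ((∑ i, α i) + (∑ i, β i)) /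
          ((2 * (Real.pi : ℂ)) ^ n * ((∏ i, Nat.factorial (α i) : ℕ) : ℂ) *
            ((∏ i, Nat.factorial (β i) : ℕ) : ℂ))) *
        ((∫ ξ : EuclideanSpace ℝ (Fin n),
            (∏ i, ξ i ^ (α i + β i)) / (1 + ‖ξ‖ ^ (2 * m)) : ℝ) : ℂ))
    (S : Finset (Fin n → ℕ))
    (hS : S = Finset.filter (fun α => ∑ i, α i ≤ K) (Finset.Iic (fun _ => K)))
    (c : (Fin n → ℕ) → ℂ) (hc : ∃ α ∈ S, c α ≠ 0) :
    (∑ α ∈ S, ∑ β ∈ S, A α β * c α * (starRingEnd ℂ) (c β)).im = 0 ∧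
    0 < (∑ α ∈ S, ∑ β ∈ S, A α β * c α * (starRingEnd ℂ) (c β)).re := by
  classical
  -- basic notation
  have hSle : ∀ α ∈ S, (∑ i, α i) ≤ K := by
    intro α hα; rw [hS] at hα; exact (Finset.mem_filter.mp hα).2
  have hdeg : ∀ α ∈ S, ∀ β ∈ S, (∑ i, (α i + β i)) + n + 1 ≤ 2 * m := by
    intro α hα β hβ
    have h1 := hSle α hα; have h2 := hSle β hβ
    have h3 : ∑ i, (α i + β i) = (∑ i, α i) + ∑ i, β i := Finset.sum_add_distrib
    omega
  -- the coefficient functions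
  set d : (Fin n → ℕ) → ℂ := fun α =>
    c α * Complex.I ^ (∑ i, α i) / ((∏ i, Nat.factorial (α i) : ℕ) : ℂ) with hd
  set g : (Fin n → ℕ) → EuclideanSpace ℝ (Fin n) → ℂ := fun α ξ =>
    d α * ((∏ i, ξ i ^ α i : ℝ) : ℂ) with hg
  set G : EuclideanSpace ℝ (Fin n) → ℂ := fun ξ => ∑ α ∈ S, g α ξ with hG
  set f : EuclideanSpace ℝ (Fin n) → ℝ := fun ξ =>
    Complex.normSq (G ξ) / (1 + ‖ξ‖ ^ (2 * m)) with hf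
  have hD : ∀ ξ : EuclideanSpace ℝ (Fin n), (0:ℝ) < 1 + ‖ξ‖ ^ (2 * m) := fun ξ => by positivity
  have hfact : ∀ α : Fin n → ℕ, ((∏ i, Nat.factorial (α i) : ℕ) : ℂ) ≠ 0 := by
    intro α
    exact Nat.cast_ne_zero.mpr (Finset.prod_ne_zero_iff.mpr fun i _ =>
      (Nat.factorial_pos _).ne')
  -- pointwise identity of integrands
  have hpt : ∀ (α β : Fin n → ℕ) (ξ : EuclideanSpace ℝ (Fin n)),
      g α ξ * (starRingEnd ℂ) (g β ξ) / ((1 + ‖ξ‖ ^ (2 * m) : ℝ) : ℂ)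
        = (d α * (starRingEnd ℂ) (d β)) *
          (((∏ i, ξ i ^ (α i + β i)) / (1 + ‖ξ‖ ^ (2 * m)) : ℝ) : ℂ) := by
    intro α β ξ
    have hprod : (∏ i, ξ i ^ (α i + β i)) = (∏ i, ξ i ^ α i) * (∏ i, ξ i ^ β i) := by
      rw [← Finset.prod_mul_distrib]
      exact Finset.prod_congr rfl fun i _ => pow_add _ _ _
    simp only [hg, hprod, map_mul, Complex.conj_ofReal]
    push_cast
    ring
  -- each mixed term is integrable
  have hIg : ∀ α ∈ S, ∀ β ∈ S, Integrable (fun ξ : EuclideanSpace ℝ (Fin n) =>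
      g α ξ * (starRingEnd ℂ) (g β ξ) / ((1 + ‖ξ‖ ^ (2 * m) : ℝ) : ℂ)) := by
    intro α hα β hβ
    have h0 := ((integrable_monomial_div (fun i => α i + β i)
      (hdeg α hα β hβ)).ofReal (𝕜 := ℂ)).const_mul (d α * (starRingEnd ℂ) (d β))
    exact h0.congr (Filter.Eventually.of_forall fun ξ => (hpt α β ξ).symm)
  -- pointwise sum identity
  have hGG : ∀ ξ : EuclideanSpace ℝ (Fin n),
      ∑ α ∈ S, ∑ β ∈ S, g α ξ * (starRingEnd ℂ) (g β ξ) / ((1 + ‖ξ‖ ^ (2 * m) : ℝ) : ℂ)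
        = ((f ξ : ℝ) : ℂ) := by
    intro ξ
    have h1 : ∑ α ∈ S, ∑ β ∈ S,
        g α ξ * (starRingEnd ℂ) (g β ξ) / ((1 + ‖ξ‖ ^ (2 * m) : ℝ) : ℂ)
        = (G ξ * (starRingEnd ℂ) (G ξ)) / ((1 + ‖ξ‖ ^ (2 * m) : ℝ) : ℂ) := by
      rw [hG]
      simp only [Finset.sum_mul, map_sum, Finset.sum_div]
      refine Finset.sum_congr rfl fun α hα => ?_
      rw [Finset.mul_sum, Finset.sum_div]
    rw [h1, Complex.mul_conj, hf]
    push_cast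
    ring
  -- the key identity
  have hterm : ∀ α ∈ S, ∀ β ∈ S,
      A α β * c α * (starRingEnd ℂ) (c β) * (2 * (Real.pi : ℂ)) ^ n
        = ∫ ξ : EuclideanSpace ℝ (Fin n),
            g α ξ * (starRingEnd ℂ) (g β ξ) / ((1 + ‖ξ‖ ^ (2 * m) : ℝ) : ℂ) := by
    intro α hα β hβ
    simp only [hpt]
    rw [integral_const_mul, integral_ofReal_complex, hA α β, hd]
    simp only [map_div₀, map_mul, map_pow, Complex.conj_I, map_natCast]
    have hπ : ((2 * (Real.pi : ℂ)) ^ n) ≠ 0 := by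
      apply pow_ne_zero
      simp [Real.pi_ne_zero, Complex.ofReal_ne_zero]
    have hIa : (Complex.I : ℂ) ^ ((∑ i, α i) + (∑ i, β i)) =
        Complex.I ^ (∑ i, α i) * Complex.I ^ (∑ i, β i) := pow_add _ _ _
    have hmI : (-Complex.I) ^ (∑ i, β i) = (-1 : ℂ) ^ (∑ i, β i) * Complex.I ^ (∑ i, β i) :=
      neg_pow _ _
    have hfa : (∏ i, ((α i).factorial : ℂ)) ≠ 0 :=
      Finset.prod_ne_zero_iff.mpr fun i _ => Nat.cast_ne_zero.mpr (Nat.factorial_pos _).ne'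
    have hfb : (∏ i, ((β i).factorial : ℂ)) ≠ 0 :=
      Finset.prod_ne_zero_iff.mpr fun i _ => Nat.cast_ne_zero.mpr (Nat.factorial_pos _).ne'
    rw [hIa, hmI]
    field_simp
  -- summing up
  have hkey : (∑ α ∈ S, ∑ β ∈ S, A α β * c α * (starRingEnd ℂ) (c β)) * (2 * (Real.pi : ℂ)) ^ n
      = ((∫ ξ : EuclideanSpace ℝ (Fin n), f ξ : ℝ) : ℂ) := by
    rw [Finset.sum_mul]
    calc ∑ α ∈ S, (∑ β ∈ S, A α β * c α * (starRingEnd ℂ) (c β)) * (2 * (Real.pi : ℂ)) ^ n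
        = ∑ α ∈ S, ∑ β ∈ S, ∫ ξ : EuclideanSpace ℝ (Fin n),
            g α ξ * (starRingEnd ℂ) (g β ξ) / ((1 + ‖ξ‖ ^ (2 * m) : ℝ) : ℂ) := by
          refine Finset.sum_congr rfl fun α hα => ?_
          rw [Finset.sum_mul]
          exact Finset.sum_congr rfl fun β hβ => hterm α hα β hβ
      _ = ∑ α ∈ S, ∫ ξ : EuclideanSpace ℝ (Fin n), ∑ β ∈ S,
            g α ξ * (starRingEnd ℂ) (g β ξ) / ((1 + ‖ξ‖ ^ (2 * m) : ℝ) : ℂ) := by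
          refine Finset.sum_congr rfl fun α hα => ?_
          rw [integral_finset_sum _ (fun β hβ => hIg α hα β hβ)]
      _ = ∫ ξ : EuclideanSpace ℝ (Fin n), ∑ α ∈ S, ∑ β ∈ S,
            g α ξ * (starRingEnd ℂ) (g β ξ) / ((1 + ‖ξ‖ ^ (2 * m) : ℝ) : ℂ) := by
          rw [integral_finset_sum _ (fun α hα =>
            integrable_finset_sum _ (fun β hβ => hIg α hα β hβ))]
      _ = ∫ ξ : EuclideanSpace ℝ (Fin n), ((f ξ : ℝ) : ℂ) :=
          integral_congr_ae (Filter.Eventually.of_forall fun ξ => hGG ξ)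
      _ = ((∫ ξ : EuclideanSpace ℝ (Fin n), f ξ : ℝ) : ℂ) := integral_ofReal_complex f
  -- integrability of f
  have hfi : Integrable f := by
    have hH : Integrable (fun ξ : EuclideanSpace ℝ (Fin n) => ((f ξ : ℝ) : ℂ)) := by
      exact (integrable_finset_sum _ (fun α hα =>
        integrable_finset_sum _ (fun β hβ => hIg α hα β hβ))).congr
        (Filter.Eventually.of_forall fun ξ => hGG ξ)
    have := hH.re
    refine this.congr (Filter.Eventually.of_forall fun ξ => ?_)
    simp
  -- G is not identically zero
  have hGne : ∃ ξ : EuclideanSpace ℝ (Fin n), G ξ ≠ 0 := by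
    by_contra hcon
    push_neg at hcon
    obtain ⟨α₀, hα₀, hc0⟩ := hc
    have hz := monomial_indep_complex S d (fun x => hcon ((WithLp.equiv 2 _).symm x)) α₀ hα₀
    rw [hd] at hz
    have hI : (Complex.I : ℂ) ^ (∑ i, α₀ i) ≠ 0 := pow_ne_zero _ Complex.I_ne_zero
    rw [div_eq_zero_iff] at hz
    rcases hz with hz | hz
    · rcases mul_eq_zero.mp hz with h | h
      · exact hc0 h
      · exact hI h
    · exact hfact α₀ hz
  -- continuity of G and f
  have hGcont : Continuous G := by
    rw [hG]
    refine continuous_finset_sum _ fun α _ => ?_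
    simp only [hg]
    exact continuous_const.mul (Complex.continuous_ofReal.comp
      (continuous_finset_prod _ fun i _ => (coord_continuous i).pow _))
  have hfcont : Continuous f := by
    rw [hf]
    exact (Complex.continuous_normSq.comp hGcont).div
      (continuous_const.add (continuous_norm.pow _)) (fun ξ => (hD ξ).ne')
  -- positivity of the integral
  have hfpos : (0:ℝ) < ∫ ξ : EuclideanSpace ℝ (Fin n), f ξ := by
    rw [integral_pos_iff_support_of_nonneg
      (fun ξ => div_nonneg (Complex.normSq_nonneg _) (hD ξ).le) hfi]
    obtain ⟨ξ₀, h0⟩ := hGne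
    have hopen : IsOpen (Function.support f) := by
      have : Function.support f = f ⁻¹' {0}ᶜ := by
        ext ξ; simp [Function.mem_support]
      rw [this]
      exact (isOpen_compl_singleton).preimage hfcont
    refine hopen.measure_pos volume ⟨ξ₀, ?_⟩
    simp only [Function.mem_support, hf]
    exact (div_pos (Complex.normSq_pos.mpr h0) (hD ξ₀)).ne'
  -- conclusion
  have hπR : ((2 * Real.pi) ^ n : ℝ) ≠ 0 := by positivity
  have hcast : ((2 * (Real.pi : ℂ)) ^ n) = (((2 * Real.pi) ^ n : ℝ) : ℂ) := by
    push_cast; ring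
  have hsum : (∑ α ∈ S, ∑ β ∈ S, A α β * c α * (starRingEnd ℂ) (c β))
      = (((∫ ξ : EuclideanSpace ℝ (Fin n), f ξ) / (2 * Real.pi) ^ n : ℝ) : ℂ) := by
    rw [Complex.ofReal_div, eq_div_iff (by
      rw [← hcast]
      exact pow_ne_zero _ (by simp [Real.pi_ne_zero, Complex.ofReal_ne_zero]))]
    rw [← hcast]
    exact hkey
  rw [hsum]
  constructor
  · exact Complex.ofReal_im _
  · rw [Complex.ofReal_re]
    exact div_pos hfpos (by positivity)
end

section
/- Let n ≥ 1 and N ≥ 0 be integers and let f : ℝⁿ → ℝ be measurable with ⟨x⟩^{2N} f ∈ L¹(ℝⁿ). Assume ∫_{ℝⁿ} x^β f(x) dx = 0 for every multi-index β with |β| ≤ N−1. Then the double integral Q(f) := ∫_{ℝⁿ}∫_{ℝⁿ} |x−y|^{2N} f(x) f(y) dx dy is absolutely convergent and (−1)^N Q(f) ≥ 0; moreover, if Q(f) = 0 then ∫_{ℝⁿ} x^α f(x) dx = 0 for every multi-index α with |α| = N. -/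
/-!
Expanding `‖x - y‖² = ‖x‖² + ‖y‖² - 2 ∑ᵢ xᵢ yᵢ` by the multinomial theorem writes the kernel
`‖x - y‖^(2N)` as a finite sum of separated terms `c_e · p_e(x) · q_e(y)`, where `p_e` and `q_e`
are `‖·‖^(2a)` times a monomial and their degrees add up to `2N`. Hence `Q(f)` is the sum of
`c_e (∫ p_e f) (∫ q_e f)`. Every moment of degree `< N` vanishes, so only the terms in which both
degrees equal `N` survive; for those `p_e = q_e`, and the sign of `c_e` is exactly `(-1)^N`.
So `(-1)^N Q(f)` is a sum of nonnegative multiples of squares, and among them are the squares of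
the moments `∫ x^α f` with `|α| = N`, each with a positive coefficient.
-/

open MeasureTheory Finset

namespace MomentKernel

section JapaneseBracket

variable {E : Type*} [SeminormedAddCommGroup E]

lemma norm_le_sqrt_one_add_norm_sq (x : E) : ‖x‖ ≤ √(1 + ‖x‖ ^ 2) :=
  Real.le_sqrt_of_sq_le (by linarith)

lemma one_le_sqrt_one_add_norm_sq (x : E) : 1 ≤ √(1 + ‖x‖ ^ 2) :=
  Real.le_sqrt_of_sq_le (by nlinarith [sq_nonneg ‖x‖])

lemma sqrt_one_add_norm_sq_pow_le_pow (x : E) {d D : ℕ} (h : d ≤ D) :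
    √(1 + ‖x‖ ^ 2) ^ d ≤ √(1 + ‖x‖ ^ 2) ^ D :=
  pow_le_pow_right₀ (one_le_sqrt_one_add_norm_sq x) h

end JapaneseBracket

lemma integrable_mul_of_abs_le {α : Type*} [MeasurableSpace α] {μ : Measure α} {w f g : α → ℝ}
    (hwf : Integrable (fun x => w x * f x) μ) (hw : Measurable w) (hg : Measurable g)
    (hw0 : ∀ x, 0 < w x) (hgw : ∀ x, |g x| ≤ w x) : Integrable (fun x => g x * f x) μ := by
  refine (hwf.bdd_mul (f := fun x => g x / w x) (c := 1) (hg.div hw).aestronglyMeasurable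
    (ae_of_all _ fun x => ?_)).congr (ae_of_all _ fun x => ?_)
  · rw [Real.norm_eq_abs, abs_div, abs_of_pos (hw0 x)]
    exact div_le_one_of_le₀ (hgw x) (hw0 x).le
  · field_simp [(hw0 x).ne']

variable {ι : Type*} [Fintype ι]

noncomputable def radialMonomial (a : ℕ) (β : ι → ℕ) (x : EuclideanSpace ℝ ι) : ℝ :=
  ‖x‖ ^ (2 * a) * ∏ i, x i ^ β i

lemma radialMonomial_zero (β : ι → ℕ) (x : EuclideanSpace ℝ ι) :
    radialMonomial 0 β x = ∏ i, x i ^ β i := by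
  simp [radialMonomial]

lemma radialMonomial_eq_sum [DecidableEq ι] (a : ℕ) (β : ι → ℕ) (x : EuclideanSpace ℝ ι) :
    radialMonomial a β x =
      ∑ γ ∈ piAntidiag univ a, (Nat.multinomial univ γ : ℝ) * ∏ i, x i ^ (2 * γ i + β i) := by
  simp only [radialMonomial, pow_mul, EuclideanSpace.real_norm_sq_eq, sum_pow_eq_sum_piAntidiag,
    sum_mul, mul_assoc, ← prod_mul_distrib, pow_add]

lemma continuous_radialMonomial (a : ℕ) (β : ι → ℕ) :
    Continuous (radialMonomial a β : EuclideanSpace ℝ ι → ℝ) := by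
  unfold radialMonomial
  fun_prop

lemma abs_radialMonomial_le (a : ℕ) (β : ι → ℕ) (x : EuclideanSpace ℝ ι) :
    |radialMonomial a β x| ≤ √(1 + ‖x‖ ^ 2) ^ (2 * a + ∑ i, β i) := by
  have hx := norm_le_sqrt_one_add_norm_sq x
  rw [radialMonomial, abs_mul, abs_prod, pow_add, ← prod_pow_eq_pow_sum, abs_pow, abs_norm]
  gcongr with i
  rw [abs_pow]
  gcongr
  exact (PiLp.norm_apply_le x i).trans hx

/-- The multinomial coefficient of the expansion of `‖x - y‖^(2N)` at the exponent `e`: over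
`Fin 2 ⊕ ι`, `e (.inl 0)` and `e (.inl 1)` are the exponents of `‖x‖²` and `‖y‖²`, and
`e (.inr i)` is the exponent of `-2 xᵢ yᵢ`. -/
def kernelCoeff (e : Fin 2 ⊕ ι → ℕ) : ℝ :=
  Nat.multinomial univ e * (-2) ^ ∑ i, e (.inr i)

lemma norm_sub_sq_eq_sum (x y : EuclideanSpace ℝ ι) :
    ‖x - y‖ ^ 2 = ∑ j, Sum.elim ![‖x‖ ^ 2, ‖y‖ ^ 2] (fun i => -2 * (x i * y i)) j := by
  simp only [norm_sub_sq_real, PiLp.inner_apply, RCLike.inner_apply, Real.ringHom_apply, mul_comm,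
    neg_mul, Fintype.sum_sum_type, Sum.elim_inl, Fin.sum_univ_two, Matrix.cons_val_zero,
    Matrix.cons_val_one, Sum.elim_inr, sum_neg_distrib, ← mul_sum]
  ring

section KernelExpansion

variable [DecidableEq ι] {N : ℕ}

lemma norm_sub_pow_two_mul_eq_sum (N : ℕ) (x y : EuclideanSpace ℝ ι) :
    ‖x - y‖ ^ (2 * N) = ∑ e ∈ piAntidiag univ N, kernelCoeff e *
      (radialMonomial (e (.inl 0)) (e ∘ .inr) x * radialMonomial (e (.inl 1)) (e ∘ .inr) y) := by
  rw [pow_mul, norm_sub_sq_eq_sum, sum_pow_eq_sum_piAntidiag]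
  refine sum_congr rfl fun e _ => ?_
  simp only [Fintype.prod_sum_type, Fin.prod_univ_two, kernelCoeff, radialMonomial, mul_pow,
    prod_mul_distrib, prod_pow_eq_pow_sum, pow_mul, Sum.elim_inl, Sum.elim_inr, Function.comp,
    Matrix.cons_val_zero, Matrix.cons_val_one]
  ring

lemma add_add_sum_inr_eq_of_mem_piAntidiag {e : Fin 2 ⊕ ι → ℕ} (he : e ∈ piAntidiag univ N) :
    e (.inl 0) + e (.inl 1) + ∑ i, (e ∘ .inr) i = N := by
  rw [← (mem_piAntidiag.1 he).1, Fintype.sum_sum_type, Fin.sum_univ_two]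
  rfl

lemma neg_one_pow_mul_kernelCoeff {e : Fin 2 ⊕ ι → ℕ} (he : e ∈ piAntidiag univ N)
    (h : e (.inl 0) = e (.inl 1)) :
    (-1) ^ N * kernelCoeff e = Nat.multinomial univ e * 2 ^ ∑ i, (e ∘ .inr) i := by
  have hN : N + ∑ i, (e ∘ .inr) i = 2 * (e (.inl 0) + ∑ i, (e ∘ .inr) i) := by
    have := add_add_sum_inr_eq_of_mem_piAntidiag he
    omega
  rw [kernelCoeff, mul_left_comm]
  congr 1
  rw [neg_pow (2 : ℝ), ← mul_assoc, ← pow_add]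
  change (-1) ^ (N + ∑ i, (e ∘ .inr) i) * (2 : ℝ) ^ ∑ i, (e ∘ .inr) i = _
  rw [hN, pow_mul, neg_one_sq, one_pow, one_mul]

lemma neg_one_pow_mul_kernelCoeff_mul_nonneg {M : ℕ → (ι → ℕ) → ℝ}
    (hM : ∀ a β, 2 * a + ∑ i, β i < N → M a β = 0) {e : Fin 2 ⊕ ι → ℕ}
    (he : e ∈ piAntidiag univ N) :
    0 ≤ (-1) ^ N * (kernelCoeff e * (M (e (.inl 0)) (e ∘ .inr) * M (e (.inl 1)) (e ∘ .inr))) := by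
  have hsum := add_add_sum_inr_eq_of_mem_piAntidiag he
  by_cases h0 : 2 * e (.inl 0) + ∑ i, (e ∘ .inr) i < N
  · simp [hM _ _ h0]
  by_cases h1 : 2 * e (.inl 1) + ∑ i, (e ∘ .inr) i < N
  · simp [hM _ _ h1]
  have h : e (.inl 0) = e (.inl 1) := by omega
  rw [← mul_assoc, neg_one_pow_mul_kernelCoeff he h, h]
  exact mul_nonneg (by positivity) (mul_self_nonneg _)

lemma eq_zero_of_neg_one_pow_mul_kernelCoeff_mul_eq_zero {e : Fin 2 ⊕ ι → ℕ}
    (he : e ∈ piAntidiag univ N) (h : e (.inl 0) = e (.inl 1)) {m : ℝ}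
    (hzero : (-1) ^ N * (kernelCoeff e * (m * m)) = 0) : m = 0 := by
  rw [← mul_assoc, neg_one_pow_mul_kernelCoeff he h] at hzero
  simpa [(Nat.multinomial_pos _ _).ne'] using hzero

end KernelExpansion

noncomputable def radialMoment (f : EuclideanSpace ℝ ι → ℝ) (a : ℕ) (β : ι → ℕ) : ℝ :=
  ∫ x, radialMonomial a β x * f x

section Moments

variable {N : ℕ} {f : EuclideanSpace ℝ ι → ℝ}

lemma integrable_radialMonomial_mul
    (hf : Integrable (fun x : EuclideanSpace ℝ ι => √(1 + ‖x‖ ^ 2) ^ (2 * N) * f x))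
    {a : ℕ} {β : ι → ℕ} (h : 2 * a + ∑ i, β i ≤ 2 * N) :
    Integrable (fun x => radialMonomial a β x * f x) :=
  integrable_mul_of_abs_le hf (by fun_prop) (continuous_radialMonomial a β).measurable
    (fun x => by positivity)
    fun x => (abs_radialMonomial_le a β x).trans (sqrt_one_add_norm_sq_pow_le_pow x h)

lemma integral_radialMonomial_mul_eq_zero
    (hf : Integrable (fun x : EuclideanSpace ℝ ι => √(1 + ‖x‖ ^ 2) ^ (2 * N) * f x))
    (hmom : ∀ β : ι → ℕ, (∑ i, β i) + 1 ≤ N →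
      ∫ x : EuclideanSpace ℝ ι, (∏ i, x i ^ β i) * f x = 0)
    {a : ℕ} {β : ι → ℕ} (h : 2 * a + ∑ i, β i < N) :
    ∫ x, radialMonomial a β x * f x = 0 := by
  classical
  have hdeg : ∀ γ ∈ piAntidiag univ a, ∑ i, (2 * γ i + β i) = 2 * a + ∑ i, β i := by
    intro γ hγ
    rw [sum_add_distrib, ← mul_sum, (mem_piAntidiag.1 hγ).1]
  have hint : ∀ γ ∈ piAntidiag univ a,
      Integrable (fun x : EuclideanSpace ℝ ι => (∏ i, x i ^ (2 * γ i + β i)) * f x) := by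
    intro γ hγ
    simp_rw [← radialMonomial_zero]
    exact integrable_radialMonomial_mul hf (by rw [hdeg γ hγ]; omega)
  simp_rw [radialMonomial_eq_sum, sum_mul, mul_assoc]
  rw [integral_finsetSum _ fun γ hγ => (hint γ hγ).const_mul _]
  refine sum_eq_zero fun γ hγ => ?_
  rw [integral_const_mul, hmom _ (by rw [hdeg γ hγ]; omega), mul_zero]

variable [DecidableEq ι]

lemma norm_sub_pow_mul_eq_sum (N : ℕ) (f : EuclideanSpace ℝ ι → ℝ)
    (p : EuclideanSpace ℝ ι × EuclideanSpace ℝ ι) :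
    ‖p.1 - p.2‖ ^ (2 * N) * f p.1 * f p.2 = ∑ e ∈ piAntidiag univ N, kernelCoeff e *
      ((radialMonomial (e (.inl 0)) (e ∘ .inr) p.1 * f p.1) *
        (radialMonomial (e (.inl 1)) (e ∘ .inr) p.2 * f p.2)) := by
  rw [norm_sub_pow_two_mul_eq_sum, sum_mul, sum_mul]
  exact sum_congr rfl fun e _ => by ring

lemma integrable_radialMonomial_mul_prod
    (hf : Integrable (fun x : EuclideanSpace ℝ ι => √(1 + ‖x‖ ^ 2) ^ (2 * N) * f x))
    {e : Fin 2 ⊕ ι → ℕ} (he : e ∈ piAntidiag univ N) :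
    Integrable (fun p : EuclideanSpace ℝ ι × EuclideanSpace ℝ ι =>
      (radialMonomial (e (.inl 0)) (e ∘ .inr) p.1 * f p.1) *
        (radialMonomial (e (.inl 1)) (e ∘ .inr) p.2 * f p.2)) := by
  have hsum := add_add_sum_inr_eq_of_mem_piAntidiag he
  rw [Measure.volume_eq_prod]
  exact (integrable_radialMonomial_mul hf (by omega)).mul_prod
    (integrable_radialMonomial_mul hf (by omega))

lemma integrable_norm_sub_pow_mul
    (hf : Integrable (fun x : EuclideanSpace ℝ ι => √(1 + ‖x‖ ^ 2) ^ (2 * N) * f x)) :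
    Integrable (fun p : EuclideanSpace ℝ ι × EuclideanSpace ℝ ι =>
      ‖p.1 - p.2‖ ^ (2 * N) * f p.1 * f p.2) := by
  simp_rw [norm_sub_pow_mul_eq_sum]
  exact integrable_finsetSum _ fun e he => (integrable_radialMonomial_mul_prod hf he).const_mul _

lemma integral_norm_sub_pow_mul_eq_sum
    (hf : Integrable (fun x : EuclideanSpace ℝ ι => √(1 + ‖x‖ ^ 2) ^ (2 * N) * f x)) :
    ∫ p : EuclideanSpace ℝ ι × EuclideanSpace ℝ ι, ‖p.1 - p.2‖ ^ (2 * N) * f p.1 * f p.2 =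
      ∑ e ∈ piAntidiag univ N, kernelCoeff e *
        (radialMoment f (e (.inl 0)) (e ∘ .inr) * radialMoment f (e (.inl 1)) (e ∘ .inr)) := by
  simp_rw [norm_sub_pow_mul_eq_sum]
  rw [integral_finsetSum _ fun e he => (integrable_radialMonomial_mul_prod hf he).const_mul _]
  refine sum_congr rfl fun e _ => ?_
  rw [integral_const_mul, Measure.volume_eq_prod]
  exact congrArg _ (integral_prod_mul (fun x => radialMonomial (e (.inl 0)) (e ∘ .inr) x * f x)
    (fun y => radialMonomial (e (.inl 1)) (e ∘ .inr) y * f y))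

end Moments

end MomentKernel

open MomentKernel

theorem quadratic_form_sign_definite_general
    (n N : ℕ)
    (f : EuclideanSpace ℝ (Fin n) → ℝ)
    (hf : Integrable (fun x : EuclideanSpace ℝ (Fin n) =>
      Real.sqrt (1 + ‖x‖^2) ^ (2 * N) * f x))
    (hmom : ∀ β : Fin n → ℕ, (∑ i, β i) + 1 ≤ N →
      ∫ x : EuclideanSpace ℝ (Fin n), (∏ i, x i ^ β i) * f x = 0) :
    Integrable (fun p : EuclideanSpace ℝ (Fin n) × EuclideanSpace ℝ (Fin n) =>
      ‖p.1 - p.2‖ ^ (2 * N) * f p.1 * f p.2) ∧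
    0 ≤ (-1 : ℝ) ^ N *
      ∫ p : EuclideanSpace ℝ (Fin n) × EuclideanSpace ℝ (Fin n),
        ‖p.1 - p.2‖ ^ (2 * N) * f p.1 * f p.2 ∧
    ((∫ p : EuclideanSpace ℝ (Fin n) × EuclideanSpace ℝ (Fin n),
        ‖p.1 - p.2‖ ^ (2 * N) * f p.1 * f p.2) = 0 →
      ∀ α : Fin n → ℕ, (∑ i, α i) = N →
        ∫ x : EuclideanSpace ℝ (Fin n), (∏ i, x i ^ α i) * f x = 0) := by
  have hM : ∀ a (β : Fin n → ℕ), 2 * a + ∑ i, β i < N → radialMoment f a β = 0 :=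
    fun _ _ h => integral_radialMonomial_mul_eq_zero hf hmom h
  have hterm := fun e (he : e ∈ piAntidiag (univ : Finset (Fin 2 ⊕ Fin n)) N) =>
    neg_one_pow_mul_kernelCoeff_mul_nonneg hM he
  refine ⟨integrable_norm_sub_pow_mul hf, ?_, fun hQ α hα => ?_⟩
  · rw [integral_norm_sub_pow_mul_eq_sum hf, mul_sum]
    exact sum_nonneg hterm
  · have he : Sum.elim (0 : Fin 2 → ℕ) α ∈ piAntidiag univ N := by
      simp [Fintype.sum_sum_type, hα]
    have hzero := (sum_eq_zero_iff_of_nonneg hterm).1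
      (by rw [← mul_sum, ← integral_norm_sub_pow_mul_eq_sum hf, hQ, mul_zero]) _ he
    simpa [radialMoment, radialMonomial_zero] using
      eq_zero_of_neg_one_pow_mul_kernelCoeff_mul_eq_zero he rfl hzero

/-- Sign-definiteness of the quadratic form with kernel `|x-y|^{2N}` on real
    functions with vanishing moments of order `< N` (key ingredient of
    Proposition 5.4, even-dimensional case): `(-1)^N Q(f) ≥ 0`, and if
    `Q(f) = 0` then all moments of order `N` vanish. -/
theorem quadratic_form_sign_definite
    (n N : ℕ) (hn : 1 ≤ n)
    (f : EuclideanSpace ℝ (Fin n) → ℝ) (hfm : Measurable f)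
    (hf : Integrable (fun x : EuclideanSpace ℝ (Fin n) =>
      Real.sqrt (1 + ‖x‖^2) ^ (2 * N) * f x))
    (hmom : ∀ β : Fin n → ℕ, (∑ i, β i) + 1 ≤ N →
      ∫ x : EuclideanSpace ℝ (Fin n), (∏ i, x i ^ β i) * f x = 0) :
    Integrable (fun p : EuclideanSpace ℝ (Fin n) × EuclideanSpace ℝ (Fin n) =>
      ‖p.1 - p.2‖ ^ (2 * N) * f p.1 * f p.2) ∧
    0 ≤ (-1 : ℝ) ^ N *
      ∫ p : EuclideanSpace ℝ (Fin n) × EuclideanSpace ℝ (Fin n),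
        ‖p.1 - p.2‖ ^ (2 * N) * f p.1 * f p.2 ∧
    ((∫ p : EuclideanSpace ℝ (Fin n) × EuclideanSpace ℝ (Fin n),
        ‖p.1 - p.2‖ ^ (2 * N) * f p.1 * f p.2) = 0 →
      ∀ α : Fin n → ℕ, (∑ i, α i) = N →
        ∫ x : EuclideanSpace ℝ (Fin n), (∏ i, x i ^ α i) * f x = 0) :=
  quadratic_form_sign_definite_general n N f hf hmom
end

section
/- For all integers k ≥ 1 and N ≥ 1 there exist positive real constants C_0, …, C_{k−1} and C'_0, …, C'_{N−1} such that for all real numbers a > 0 and b > 0 one has the identity a^{−k} = Σ_{l=0}^{k−1} C_l · (b−a)^N · b^{−(N+l)} · a^{−(k−l)} + Σ_{l=0}^{N−1} C'_l · (b−a)^l · b^{−(k+l)}. -/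
/-!
Put `x = a / b`, so `1 - x = (b - a) / b`. In Bernoulli trials with success probability `x`,
either the `k`-th success precedes the `N`-th failure or the other way round, whence
`x ^ k * ∑ l < N, C(k-1+l, l) (1-x)^l + (1-x)^N * ∑ l < k, C(N-1+l, l) x^l = 1`.
Multiplying by `a⁻ᵏ` gives the expansion with binomial, hence positive, coefficients.
The identity itself is proved algebraically, by induction on `N` using Pascal's rule.
-/

open Finset

variable {R : Type*} [CommRing R]

theorem sum_range_choose_mul_pow_eq (n m : ℕ) (x : R) :
    ∑ l ∈ range (m + 1), ((n + l).choose l : R) * x ^ l =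
      (1 - x) * ∑ l ∈ range (m + 1), ((n + 1 + l).choose l : R) * x ^ l +
        ((n + 1 + m).choose m : R) * x ^ (m + 1) := by
  induction m with
  | zero => simp
  | succ m ih =>
    have pascal : ((n + 1 + (m + 1)).choose (m + 1) : R) =
        ((n + 1 + m).choose m : R) + ((n + (m + 1)).choose (m + 1) : R) := by
      rw [show n + 1 + (m + 1) = (n + 1 + m) + 1 by omega, Nat.choose_succ_succ',
        show n + (m + 1) = n + 1 + m by omega]
      push_cast; rfl
    rw [sum_range_succ, ih, sum_range_succ _ (m + 1), pascal]
    ring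

/-- With success probability `x`, the probability that at most `n` failures precede the
`(m + 1)`-th success. -/
def negBinomialCDF (m n : ℕ) (x : R) : R :=
  x ^ (m + 1) * ∑ l ∈ range (n + 1), ((m + l).choose l : R) * (1 - x) ^ l

theorem negBinomialCDF_add_negBinomialCDF_one_sub (m n : ℕ) (x : R) :
    negBinomialCDF m n x + negBinomialCDF n m (1 - x) = 1 := by
  unfold negBinomialCDF
  rw [sub_sub_cancel]
  induction n with
  | zero =>
    simp only [zero_add, sum_range_one, Nat.choose_self, Nat.choose_zero_right, Nat.cast_one,
      one_mul, pow_zero, mul_one]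
    linear_combination mul_neg_geom_sum x (m + 1)
  | succ n ih =>
    rw [sum_range_succ, add_comm m (n + 1), Nat.choose_symm_add]
    linear_combination ih - (1 - x) ^ (n + 1) * sum_range_choose_mul_pow_eq n m x

theorem inv_pow_eq_sum_add_sum {K : Type*} [Field K] (m n : ℕ) {a b : K}
    (ha : a ≠ 0) (hb : b ≠ 0) :
    (a ^ (m + 1))⁻¹ =
      ∑ l ∈ range (m + 1), ((n + l).choose l : K) * (b - a) ^ (n + 1) * (b ^ (n + 1 + l))⁻¹ *
          (a ^ (m + 1 - l))⁻¹ +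
        ∑ l ∈ range (n + 1), ((m + l).choose l : K) * (b - a) ^ l * (b ^ (m + 1 + l))⁻¹ := by
  have hx : 1 - a / b = (b - a) / b := by field_simp
  have key := negBinomialCDF_add_negBinomialCDF_one_sub m n (a / b)
  unfold negBinomialCDF at key
  rw [sub_sub_cancel, hx, add_comm] at key
  rw [← mul_one (a ^ (m + 1))⁻¹, ← key, mul_add, mul_sum, mul_sum, mul_sum, mul_sum]
  congr 1 <;> refine sum_congr rfl fun l hl => ?_
  · rw [pow_sub₀ a ha (mem_range.mp hl).le]
    simp only [div_pow]
    field_simp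
    ring
  · simp only [div_pow]
    field_simp
    ring

/-- The algebraic expansion identity (eq. A.3 of Appendix C): there are
    positive constants `C_0,…,C_{k-1}` and `C'_0,…,C'_{N-1}` such that for all
    `a, b > 0`,
    `a^{-k} = Σ_{l<k} C_l (b-a)^N b^{-(N+l)} a^{-(k-l)}
            + Σ_{l<N} C'_l (b-a)^l b^{-(k+l)}`. -/
theorem expansion_identity
    (k N : ℕ) (hk : 1 ≤ k) (hN : 1 ≤ N) :
    ∃ C : Fin k → ℝ, ∃ C' : Fin N → ℝ,
      (∀ l, 0 < C l) ∧ (∀ l, 0 < C' l) ∧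
      ∀ a b : ℝ, 0 < a → 0 < b →
        a ^ (-(k : ℤ)) =
          (∑ l : Fin k, C l * (b - a) ^ N * b ^ (-((N + (l : ℕ) : ℕ) : ℤ)) *
            a ^ (-((k - (l : ℕ) : ℕ) : ℤ))) +
          ∑ l : Fin N, C' l * (b - a) ^ (l : ℕ) * b ^ (-((k + (l : ℕ) : ℕ) : ℤ)) := by
  obtain ⟨m, rfl⟩ : ∃ m, k = m + 1 := ⟨k - 1, by omega⟩
  obtain ⟨n, rfl⟩ : ∃ n, N = n + 1 := ⟨N - 1, by omega⟩
  refine ⟨fun l => ((n + l).choose l : ℝ), fun l => ((m + l).choose l : ℝ),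
    fun _ => Nat.cast_pos.mpr (Nat.choose_pos (Nat.le_add_left _ _)),
    fun _ => Nat.cast_pos.mpr (Nat.choose_pos (Nat.le_add_left _ _)), fun a b ha hb => ?_⟩
  simp only [zpow_neg, zpow_natCast]
  rw [Fin.sum_univ_eq_sum_range (fun l => ((n + l).choose l : ℝ) * (b - a) ^ (n + 1) *
      (b ^ (n + 1 + l))⁻¹ * (a ^ (m + 1 - l))⁻¹),
    Fin.sum_univ_eq_sum_range (fun l => ((m + l).choose l : ℝ) * (b - a) ^ l *
      (b ^ (m + 1 + l))⁻¹)]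
  exact inv_pow_eq_sum_add_sum m n ha.ne' hb.ne'
end
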